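/- Let V be a real vector space of finite dimension m. For every 2-form B ∈ ∧²V* and all spinors s, t ∈ ∧•V*, the Mukai pairing is invariant under wedging with the exponential of B: (exp(B) ∧ s, exp(B) ∧ t) = (s, t), where exp(B) = Σ_j B^{∧j}/j!. This is the invariance of the Mukai pairing under the spinorial action of B-field transformations, which lie in the identity component of Spin(V ⊕ V*). -/

import Mathlib

set_option synthInstance.maxHeartbeats 1000000
set_option maxHeartbeats 1000000

open Module

/-- Projection onto the degree-`j` component of the exterior algebra. -/
noncomputable def extProj (V : Type*) [AddCommGroup V] [Module ℝ V] (j : ℕ) :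
    ExteriorAlgebra ℝ (Module.Dual ℝ V) →ₗ[ℝ] ExteriorAlgebra ℝ (Module.Dual ℝ V) :=
  (Submodule.subtype _) ∘ₗ
    (DirectSum.component ℝ ℕ (fun i => ⋀[ℝ]^i (Module.Dual ℝ V)) j) ∘ₗ
      (DirectSum.decomposeLinearEquiv (fun i : ℕ => ⋀[ℝ]^i (Module.Dual ℝ V))).toLinearMap

/-- The reversal antiautomorphism `α`, acting on the degree-`k` component as
`(−1)^{k(k−1)/2}`. -/
noncomputable def alphaMap (V : Type*) [AddCommGroup V] [Module ℝ V] :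
    ExteriorAlgebra ℝ (Module.Dual ℝ V) →ₗ[ℝ] ExteriorAlgebra ℝ (Module.Dual ℝ V) :=
  (DirectSum.toModule ℝ ℕ (ExteriorAlgebra ℝ (Module.Dual ℝ V))
      fun k => ((-1 : ℝ) ^ (k * (k - 1) / 2)) • (Submodule.subtype _)) ∘ₗ
    (DirectSum.decomposeLinearEquiv (fun i : ℕ => ⋀[ℝ]^i (Module.Dual ℝ V))).toLinearMap

/-- The Mukai pairing `(s, t) = (α(s) ∧ t)_m` on `∧•V*`. -/
noncomputable def mukai (V : Type*) [AddCommGroup V] [Module ℝ V]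
    (s t : ExteriorAlgebra ℝ (Module.Dual ℝ V)) : ExteriorAlgebra ℝ (Module.Dual ℝ V) :=
  extProj V (Module.finrank ℝ V) (alphaMap V s * t)

/-- The exponential `exp(B) = Σ_j B^{∧j}/j!` of a 2-form inside `∧•V*`. -/
noncomputable def expWedge {V : Type*} [AddCommGroup V] [Module ℝ V] [FiniteDimensional ℝ V]
    (β : ExteriorAlgebra ℝ (Module.Dual ℝ V)) : ExteriorAlgebra ℝ (Module.Dual ℝ V) :=
  ∑ j ∈ Finset.range (Module.finrank ℝ V + 1), ((Nat.factorial j : ℝ))⁻¹ • β ^ j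

section Aux

variable (V : Type*) [AddCommGroup V] [Module ℝ V]

lemma alpha_of_mem {k : ℕ} {x : ExteriorAlgebra ℝ (Module.Dual ℝ V)}
    (hx : x ∈ ⋀[ℝ]^k (Module.Dual ℝ V)) :
    alphaMap V x = ((-1 : ℝ) ^ (k * (k - 1) / 2)) • x := by
  unfold alphaMap
  simp only [LinearMap.coe_comp, Function.comp_apply, LinearEquiv.coe_coe,
    DirectSum.decomposeLinearEquiv_apply]
  rw [DirectSum.decompose_of_mem (fun i : ℕ => ⋀[ℝ]^i (Module.Dual ℝ V)) hx,
    ← DirectSum.lof_eq_of ℝ, DirectSum.toModule_lof]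
  simp

lemma extProj_of_mem_self {k : ℕ} {x : ExteriorAlgebra ℝ (Module.Dual ℝ V)}
    (hx : x ∈ ⋀[ℝ]^k (Module.Dual ℝ V)) : extProj V k x = x := by
  unfold extProj
  simp only [LinearMap.coe_comp, Function.comp_apply, LinearEquiv.coe_coe,
    DirectSum.decomposeLinearEquiv_apply, ← DirectSum.apply_eq_component,
    Submodule.subtype_apply]
  rw [DirectSum.decompose_of_mem_same (fun i : ℕ => ⋀[ℝ]^i (Module.Dual ℝ V)) hx]

lemma extProj_of_mem_ne {k j : ℕ} {x : ExteriorAlgebra ℝ (Module.Dual ℝ V)}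
    (hx : x ∈ ⋀[ℝ]^k (Module.Dual ℝ V)) (h : k ≠ j) : extProj V j x = 0 := by
  unfold extProj
  simp only [LinearMap.coe_comp, Function.comp_apply, LinearEquiv.coe_coe,
    DirectSum.decomposeLinearEquiv_apply, ← DirectSum.apply_eq_component,
    Submodule.subtype_apply]
  rw [DirectSum.decompose_of_mem_ne (fun i : ℕ => ⋀[ℝ]^i (Module.Dual ℝ V)) hx h]

lemma neg_one_pow_q (j k : ℕ) :
    ((-1 : ℝ)) ^ ((2 * j + k) * ((2 * j + k) - 1) / 2) =
      (-1 : ℝ) ^ j * (-1 : ℝ) ^ (k * (k - 1) / 2) := by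
  induction j with
  | zero => simp
  | succ j ih =>
    have h : (2 * (j + 1) + k) * ((2 * (j + 1) + k) - 1) / 2 =
        (2 * j + k) * ((2 * j + k) - 1) / 2 + (2 * (2 * j + k) + 1) := by
      set n := 2 * j + k with hn
      have e1 : (2 * (j + 1) + k) * ((2 * (j + 1) + k) - 1) = n * (n - 1) + 4 * n + 2 := by
        have : 2 * (j + 1) + k = n + 2 := by omega
        rw [this]
        cases n with
        | zero => simp
        | succ p => simp only [Nat.succ_sub_one, Nat.add_sub_cancel]; ring
      have e2 : 2 ∣ n * (n - 1) := by
        cases n with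
        | zero => simp
        | succ p =>
          simpa [Nat.succ_sub_one, Nat.mul_comm] using (Nat.even_mul_succ_self p).two_dvd
      generalize hA : n * (n - 1) = A at e1 e2
      generalize hB : (2 * (j + 1) + k) * ((2 * (j + 1) + k) - 1) = B at e1
      omega
    have h2 : ((-1 : ℝ)) ^ (2 * (2 * j + k) + 1) = -1 := by
      rw [pow_succ, pow_mul, neg_one_sq, one_pow, one_mul]
    rw [h, pow_add, ih, h2, pow_succ]
    ring

lemma exteriorPower_eq_bot [FiniteDimensional ℝ V] (n : ℕ) (hn : Module.finrank ℝ V < n) :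
    ⋀[ℝ]^n (Module.Dual ℝ V) = ⊥ := by
  rw [← ExteriorAlgebra.ιMulti_span_fixedDegree, Submodule.span_eq_bot]
  rintro _ ⟨v, rfl⟩
  apply AlternatingMap.map_linearDependent
  intro hv
  have := hv.fintype_card_le_finrank
  rw [Fintype.card_fin, Subspace.dual_finrank_eq] at this
  omega

variable {V}

lemma beta_commute (β : ExteriorAlgebra ℝ (Module.Dual ℝ V))
    (hβ : β ∈ ⋀[ℝ]^2 (Module.Dual ℝ V)) (x : ExteriorAlgebra ℝ (Module.Dual ℝ V)) :
    Commute β x := by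
  have swap : ∀ a b : Module.Dual ℝ V,
      ExteriorAlgebra.ι ℝ a * ExteriorAlgebra.ι ℝ b =
        -(ExteriorAlgebra.ι ℝ b * ExteriorAlgebra.ι ℝ a) := by
    intro a b
    exact eq_neg_of_add_eq_zero_left (ExteriorAlgebra.ι_add_mul_swap a b)
  have hι : ∀ c : Module.Dual ℝ V, Commute β (ExteriorAlgebra.ι ℝ c) := by
    intro c
    rw [← ExteriorAlgebra.ιMulti_span_fixedDegree] at hβ
    induction hβ using Submodule.span_induction with
    | mem y hy =>
      obtain ⟨v, rfl⟩ := hy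
      have : ExteriorAlgebra.ιMulti ℝ 2 v =
          ExteriorAlgebra.ι ℝ (v 0) * ExteriorAlgebra.ι ℝ (v 1) := by
        simp [ExteriorAlgebra.ιMulti_apply, List.ofFn_succ, Matrix.vecTail, Function.comp]
      rw [this]
      show _ * _ = _ * _
      rw [mul_assoc, swap (v 1) c, mul_neg, ← mul_assoc, swap (v 0) c, neg_mul, neg_neg,
        mul_assoc]
    | zero => exact Commute.zero_left _
    | add y z _ _ hy hz => exact hy.add_left hz
    | smul r y _ hy => exact hy.smul_left r
  induction x using ExteriorAlgebra.induction with
  | algebraMap r => exact (Algebra.commutes r β).symm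
  | ι c => exact hι c
  | mul a b ha hb => exact ha.mul_right hb
  | add a b ha hb => exact ha.add_right hb

lemma pow_eq_zero_of_big [FiniteDimensional ℝ V] (β : ExteriorAlgebra ℝ (Module.Dual ℝ V))
    (hβ : β ∈ ⋀[ℝ]^2 (Module.Dual ℝ V)) {n : ℕ} (hn : Module.finrank ℝ V < n) :
    β ^ n = 0 := by
  have hmem : β ^ n ∈ ⋀[ℝ]^(n * 2) (Module.Dual ℝ V) := by
    simpa [smul_eq_mul] using SetLike.pow_mem_graded n hβ
  rw [exteriorPower_eq_bot V (n * 2) (by omega)] at hmem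
  simpa using hmem

lemma alt_factorial_sum {n : ℕ} (hn : n ≠ 0) :
    ∑ ij ∈ Finset.HasAntidiagonal.antidiagonal n,
      ((-1 : ℝ) ^ ij.1 * ((ij.1.factorial : ℝ))⁻¹) * ((ij.2.factorial : ℝ))⁻¹ = 0 := by
  rw [Finset.Nat.sum_antidiagonal_eq_sum_range_succ_mk]
  have key : ∀ i ∈ Finset.range (n + 1),
      ((-1 : ℝ) ^ i * ((i.factorial : ℝ))⁻¹) * (((n - i).factorial : ℝ))⁻¹ =
        ((n.factorial : ℝ))⁻¹ * ((-1 : ℝ) ^ i * (n.choose i : ℝ)) := by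
    intro i hi
    have h := Nat.choose_mul_factorial_mul_factorial (Nat.lt_succ_iff.mp (Finset.mem_range.mp hi))
    have h' : (n.choose i : ℝ) * (i.factorial : ℝ) * ((n - i).factorial : ℝ) = n.factorial := by
      exact_mod_cast congrArg (Nat.cast : ℕ → ℝ) h
    have h1 : (i.factorial : ℝ) ≠ 0 := Nat.cast_ne_zero.mpr (Nat.factorial_ne_zero i)
    have h2 : ((n - i).factorial : ℝ) ≠ 0 := Nat.cast_ne_zero.mpr (Nat.factorial_ne_zero _)
    have h3 : (n.factorial : ℝ) ≠ 0 := Nat.cast_ne_zero.mpr (Nat.factorial_ne_zero n)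
    field_simp
    rw [← h']
    ring
  rw [Finset.sum_congr rfl key, ← Finset.mul_sum]
  have : ∑ i ∈ Finset.range (n + 1), ((-1 : ℝ) ^ i * (n.choose i : ℝ)) = 0 := by
    have := Int.alternating_sum_range_choose_of_ne hn
    exact_mod_cast congrArg (Int.cast : ℤ → ℝ) this
  rw [this, mul_zero]

end Aux


/-- The Mukai pairing is invariant under wedging with the exponential of a
2-form `B ∈ ∧²V*` (the spinorial action of a B-field transformation):
`(exp(B) ∧ s, exp(B) ∧ t) = (s, t)`. -/
theorem mukai_expWedge_invariant
    (V : Type*) [AddCommGroup V] [Module ℝ V] [FiniteDimensional ℝ V]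
    (β : ExteriorAlgebra ℝ (Module.Dual ℝ V)) (hβ : β ∈ ⋀[ℝ]^2 (Module.Dual ℝ V))
    (s t : ExteriorAlgebra ℝ (Module.Dual ℝ V)) :
    mukai V (expWedge β * s) (expWedge β * t) = mukai V s t := by
  classical
  set m := Module.finrank ℝ V with hm
  set N := m + 1 with hN
  set E := expWedge β with hE
  set E' : ExteriorAlgebra ℝ (Module.Dual ℝ V) :=
    ∑ j ∈ Finset.range N, ((-1 : ℝ) ^ j * ((j.factorial : ℝ))⁻¹) • β ^ j with hE'
  -- Step 1: alphaMap (E * s) = E' * alphaMap s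
  have step1 : ∀ u : ExteriorAlgebra ℝ (Module.Dual ℝ V),
      alphaMap V (E * u) = E' * alphaMap V u := by
    intro u
    induction u using DirectSum.Decomposition.inductionOn
        (fun i : ℕ => ⋀[ℝ]^i (Module.Dual ℝ V)) with
    | zero => simp
    | add a b ha hb => rw [mul_add, map_add, ha, hb, map_add, mul_add]
    | homogeneous y =>
      obtain ⟨x, hx⟩ := y
      rename_i i
      show alphaMap V (E * x) = E' * alphaMap V x
      rw [hE, expWedge, ← hm, ← hN, Finset.sum_mul, map_sum, hE', Finset.sum_mul]
      refine Finset.sum_congr rfl fun j _ => ?_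
      have hmem : β ^ j * x ∈ ⋀[ℝ]^(2 * j + i) (Module.Dual ℝ V) := by
        have := SetLike.mul_mem_graded (SetLike.pow_mem_graded j hβ) hx
        simpa [smul_eq_mul, Nat.mul_comm] using this
      rw [smul_mul_assoc, map_smul, alpha_of_mem V hmem, alpha_of_mem V hx, neg_one_pow_q,
        smul_mul_assoc, mul_smul_comm, smul_smul, smul_smul]
      congr 1
      ring
  -- Step 2: E' * E = 1
  have step2 : E' * E = 1 := by
    set P : Polynomial ℝ :=
      ∑ j ∈ Finset.range N, Polynomial.C ((j.factorial : ℝ))⁻¹ * Polynomial.X ^ j with hP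
    set Q : Polynomial ℝ :=
      ∑ j ∈ Finset.range N, Polynomial.C ((-1 : ℝ) ^ j * ((j.factorial : ℝ))⁻¹) *
        Polynomial.X ^ j with hQ
    have hPc : ∀ i : ℕ, P.coeff i =
        if i ∈ Finset.range N then ((i.factorial : ℝ))⁻¹ else 0 := by
      intro i
      rw [hP, Polynomial.finset_sum_coeff]
      simp only [Polynomial.coeff_C_mul, Polynomial.coeff_X_pow, mul_ite, mul_one, mul_zero]
      rw [Finset.sum_ite_eq]
    have hQc : ∀ i : ℕ, Q.coeff i =
        if i ∈ Finset.range N then (-1 : ℝ) ^ i * ((i.factorial : ℝ))⁻¹ else 0 := by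
      intro i
      rw [hQ, Polynomial.finset_sum_coeff]
      simp only [Polynomial.coeff_C_mul, Polynomial.coeff_X_pow, mul_ite, mul_one, mul_zero]
      rw [Finset.sum_ite_eq]
    have hEP : E = Polynomial.aeval β P := by
      rw [hP, map_sum, hE, expWedge, ← hm, ← hN]
      refine Finset.sum_congr rfl fun j _ => ?_
      rw [map_mul, Polynomial.aeval_C, map_pow, Polynomial.aeval_X, Algebra.smul_def]
    have hEQ : E' = Polynomial.aeval β Q := by
      rw [hQ, map_sum, hE']
      refine Finset.sum_congr rfl fun j _ => ?_
      rw [map_mul, Polynomial.aeval_C, map_pow, Polynomial.aeval_X, Algebra.smul_def]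
    rw [hEP, hEQ, ← map_mul]
    have hdegP : P.natDegree < N := by
      have : P.natDegree ≤ N - 1 := by
        apply Polynomial.natDegree_sum_le_of_forall_le
        intro j hj
        refine le_trans (Polynomial.natDegree_C_mul_le _ _) ?_
        rw [Polynomial.natDegree_X_pow]
        exact Nat.le_sub_one_of_lt (Finset.mem_range.mp hj)
      omega
    have hdegQ : Q.natDegree < N := by
      have : Q.natDegree ≤ N - 1 := by
        apply Polynomial.natDegree_sum_le_of_forall_le
        intro j hj
        refine le_trans (Polynomial.natDegree_C_mul_le _ _) ?_
        rw [Polynomial.natDegree_X_pow]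
        exact Nat.le_sub_one_of_lt (Finset.mem_range.mp hj)
      omega
    have hdeg : (Q * P).natDegree < 2 * N :=
      lt_of_le_of_lt (Polynomial.natDegree_mul_le) (by omega)
    rw [Polynomial.aeval_eq_sum_range' hdeg]
    rw [Finset.sum_eq_single 0]
    · have h0 : (Q * P).coeff 0 = 1 := by
        rw [Polynomial.mul_coeff_zero, hPc, hQc]
        simp [hN]
      rw [h0, pow_zero, one_smul]
    · intro i _ hi0
      by_cases him : i ≤ m
      · have hc : (Q * P).coeff i = 0 := by
        -- coeff via antidiagonal
          rw [Polynomial.coeff_mul]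
          have : ∀ ij ∈ Finset.HasAntidiagonal.antidiagonal i,
              Q.coeff ij.1 * P.coeff ij.2 =
                ((-1 : ℝ) ^ ij.1 * ((ij.1.factorial : ℝ))⁻¹) * ((ij.2.factorial : ℝ))⁻¹ := by
            rintro ⟨a, b⟩ hab
            rw [Finset.HasAntidiagonal.mem_antidiagonal] at hab
            rw [hPc, hQc, if_pos, if_pos]
            · exact Finset.mem_range.mpr (by omega)
            · exact Finset.mem_range.mpr (by omega)
          rw [Finset.sum_congr rfl this]
          exact alt_factorial_sum hi0
        rw [hc, zero_smul]
      · have : β ^ i = 0 := pow_eq_zero_of_big β hβ (by omega)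
        rw [this, smul_zero]
    · intro h
      exact absurd (Finset.mem_range.mpr (by omega)) h
  -- Final assembly
  have hcom : ∀ x, Commute E x := by
    intro x
    rw [hE, expWedge]
    exact Commute.sum_left _ _ _ fun j _ => ((beta_commute β hβ x).pow_left j).smul_left _
  unfold mukai
  rw [step1 s]
  have key : (E' * alphaMap V s) * (E * t) = (E' * E) * (alphaMap V s * t) := by
    rw [mul_assoc, ← mul_assoc (alphaMap V s), ← (hcom (alphaMap V s)).eq, mul_assoc, mul_assoc]
  rw [key, step2, one_mul]
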